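/- Let M be a finite machine state space, I a finite input space, H a finite hidden state space, A a finite action space, with interpretation map ψ : M → P(H), action function α : M → A, model kernel κ : H × A → P(H × I), and machine kernel μ : I × M → P(M), satisfying the consistency equation: for all m, m', h', i, (Σ_h κ(h',i | h, α(m)) ψ(h|m)) · μ(m'|i,m) = ψ(h'|m') · (Σ_h Σ_{h''} κ(h'',i | h, α(m)) ψ(h|m)) · μ(m'|i,m). Then for any m, i such that the input i is subjectively possible (Σ_h Σ_{h''} κ(h'',i|h,α(m)) ψ(h|m) > 0), and any m' with μ(m'|i,m) > 0, the updated belief is the Bayesian posterior: ψ(h'|m') = (Σ_h κ(h',i|h,α(m)) ψ(h|m)) / (Σ_h Σ_{h''} κ(h'',i|h,α(m)) ψ(h|m)) for all h'. -/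

import Mathlib

theorem eq_div_of_mul_eq_mul_mul {K : Type*} [Field K] {a b c d : K} (hc : c ≠ 0) (hd : d ≠ 0)
    (h : a * c = b * (d * c)) : b = a / d := by
  rw [← mul_assoc] at h
  rw [eq_div_iff hd]
  exact (mul_right_cancel₀ hc h).symm

theorem consistent_influenced_filtering_posterior_general
    {M I H A : Type} [Fintype H]
    (ψ : M → H → ℝ) (α : M → A) (κ : H → A → H → I → ℝ) (μ : I → M → M → ℝ)
    (hcons : ∀ m m' h' i,
      (∑ h, κ h (α m) h' i * ψ m h) * μ i m m' =
        ψ m' h' * ((∑ h, ∑ h'', κ h (α m) h'' i * ψ m h) * μ i m m')) :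
    ∀ m i, 0 < ∑ h, ∑ h'', κ h (α m) h'' i * ψ m h →
      ∀ m', 0 < μ i m m' → ∀ h',
        ψ m' h' = (∑ h, κ h (α m) h' i * ψ m h) /
          (∑ h, ∑ h'', κ h (α m) h'' i * ψ m h) :=
  fun m i hpossible m' hμ h' =>
    eq_div_of_mul_eq_mul_mul hμ.ne' hpossible.ne' (hcons m m' h' i)

theorem consistent_influenced_filtering_posterior
    {M I H A : Type} [Fintype M] [Fintype I] [Fintype H] [Fintype A]
    (ψ : M → H → ℝ) (α : M → A) (κ : H → A → H → I → ℝ) (μ : I → M → M → ℝ)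
    (hψ : ∀ m, (∀ h, 0 ≤ ψ m h) ∧ ∑ h, ψ m h = 1)
    (hκ : ∀ h a, (∀ h' i, 0 ≤ κ h a h' i) ∧ ∑ h', ∑ i, κ h a h' i = 1)
    (hμ : ∀ i m, (∀ m', 0 ≤ μ i m m') ∧ ∑ m', μ i m m' = 1)
    (hcons : ∀ m m' h' i,
      (∑ h, κ h (α m) h' i * ψ m h) * μ i m m' =
        ψ m' h' * ((∑ h, ∑ h'', κ h (α m) h'' i * ψ m h) * μ i m m')) :
    ∀ m i, 0 < ∑ h, ∑ h'', κ h (α m) h'' i * ψ m h →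
      ∀ m', 0 < μ i m m' → ∀ h',
        ψ m' h' = (∑ h, κ h (α m) h' i * ψ m h) /
          (∑ h, ∑ h'', κ h (α m) h'' i * ψ m h) :=
  consistent_influenced_filtering_posterior_general ψ α κ μ hcons
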